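/- arXiv:1001.0086 — 2 statements merged into one kernel-verified Lean document; each statement's English description precedes it below -/
import Mathlib

section
/- Let $s/r$, $u/t$, and $0$ be three distinct rational slopes (with $r,s,t,u$ integers, $r,t \neq 0$, $su \neq 0$, $ru \neq st$), and let $A = \begin{pmatrix} 1 & -\frac{1}{2}\frac{ru+st}{su} \\ 0 & \frac{\sqrt{3}}{2}\frac{ru-st}{su} \end{pmatrix}$. Then the images under $A$ of the three lines through the origin with direction vectors $(1,0)$, $(r,s)$, and $(t,u)$ are three lines through the origin that pairwise make angle $\pi/3$. -/
/-- The symmetrization matrix for slopes `0`, `s/r`, `u/t`. -/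
noncomputable def symA (r s t u : ℤ) : Matrix (Fin 2) (Fin 2) ℝ :=
  !![1, -(1 / 2) * (((r : ℝ) * u + s * t) / ((s : ℝ) * u));
     0, (Real.sqrt 3 / 2) * (((r : ℝ) * u - s * t) / ((s : ℝ) * u))]

noncomputable def norm2 (v : Fin 2 → ℝ) : ℝ := Real.sqrt (v 0 ^ 2 + v 1 ^ 2)

def dot2 (v w : Fin 2 → ℝ) : ℝ := v 0 * w 0 + v 1 * w 1

lemma norm2_special (c : ℝ) : norm2 ![c, Real.sqrt 3 * c] = 2 * |c| := by
  have h : (c : ℝ) ^ 2 + (Real.sqrt 3 * c) ^ 2 = (2 * |c|) ^ 2 := by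
    rw [mul_pow, Real.sq_sqrt (by norm_num : (3:ℝ) ≥ 0), mul_pow, sq_abs]; ring
  simp only [norm2, Matrix.cons_val_zero, Matrix.cons_val_one, Matrix.head_cons]
  rw [h, Real.sqrt_sq (by positivity)]

/-- The images under `A` of the lines through the origin with directions `(1,0)`, `(r,s)`,
`(t,u)` are three lines through the origin pairwise making angle `π/3`. -/
theorem stmt_1 (r s t u : ℤ) (hr : r ≠ 0) (ht : t ≠ 0) (hsu : s * u ≠ 0)
    (hne : r * u ≠ s * t) :
    (symA r s t u).mulVec ![1, 0] ≠ 0 ∧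
    (symA r s t u).mulVec ![(r : ℝ), (s : ℝ)] ≠ 0 ∧
    (symA r s t u).mulVec ![(t : ℝ), (u : ℝ)] ≠ 0 ∧
    |dot2 ((symA r s t u).mulVec ![1, 0]) ((symA r s t u).mulVec ![(r : ℝ), (s : ℝ)])| =
      norm2 ((symA r s t u).mulVec ![1, 0]) *
        norm2 ((symA r s t u).mulVec ![(r : ℝ), (s : ℝ)]) * Real.cos (Real.pi / 3) ∧
    |dot2 ((symA r s t u).mulVec ![1, 0]) ((symA r s t u).mulVec ![(t : ℝ), (u : ℝ)])| =
      norm2 ((symA r s t u).mulVec ![1, 0]) *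
        norm2 ((symA r s t u).mulVec ![(t : ℝ), (u : ℝ)]) * Real.cos (Real.pi / 3) ∧
    |dot2 ((symA r s t u).mulVec ![(r : ℝ), (s : ℝ)])
        ((symA r s t u).mulVec ![(t : ℝ), (u : ℝ)])| =
      norm2 ((symA r s t u).mulVec ![(r : ℝ), (s : ℝ)]) *
        norm2 ((symA r s t u).mulVec ![(t : ℝ), (u : ℝ)]) * Real.cos (Real.pi / 3) := by
  have hs : (s:ℝ) ≠ 0 := by
    have := (mul_ne_zero_iff.mp hsu).1; exact_mod_cast this
  have hu : (u:ℝ) ≠ 0 := by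
    have := (mul_ne_zero_iff.mp hsu).2; exact_mod_cast this
  have hd : (r:ℝ) * u - s * t ≠ 0 := by
    intro h
    apply hne
    have : (r:ℝ) * u = s * t := by linarith
    exact_mod_cast this
  set c1 : ℝ := ((r:ℝ) * u - s * t) / (2 * u) with hc1
  set c2 : ℝ := ((r:ℝ) * u - s * t) / (2 * s) with hc2
  have hc1ne : c1 ≠ 0 := div_ne_zero hd (by simpa using hu)
  have hc2ne : c2 ≠ 0 := div_ne_zero hd (by simpa using hs)
  have h1 : (symA r s t u).mulVec ![1, 0] = ![1, 0] := by
    funext i; fin_cases i <;>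
      simp [symA, Matrix.mulVec, dotProduct, Fin.sum_univ_two]
  have h2 : (symA r s t u).mulVec ![(r : ℝ), (s : ℝ)] = ![c1, Real.sqrt 3 * c1] := by
    funext i; fin_cases i <;>
      · simp only [symA, Matrix.mulVec, dotProduct, Fin.sum_univ_two,
          Matrix.cons_val', Matrix.cons_val_zero, Matrix.cons_val_one, Matrix.head_cons,
          Matrix.empty_val', Matrix.cons_val_fin_one, Matrix.head_fin_const, Fin.isValue,
          Matrix.cons_val_fin_one, Fin.zero_eta, Fin.mk_one, Matrix.of_apply, hc1]
        field_simp
        ring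
  have h3 : (symA r s t u).mulVec ![(t : ℝ), (u : ℝ)] = ![-c2, Real.sqrt 3 * c2] := by
    funext i; fin_cases i <;>
      · simp only [symA, Matrix.mulVec, dotProduct, Fin.sum_univ_two,
          Matrix.cons_val', Matrix.cons_val_zero, Matrix.cons_val_one, Matrix.head_cons,
          Matrix.empty_val', Matrix.cons_val_fin_one, Matrix.head_fin_const, Fin.isValue,
          Matrix.cons_val_fin_one, Fin.zero_eta, Fin.mk_one, Matrix.of_apply, hc2]
        field_simp
        ring
  have norm2_special' : ∀ c : ℝ, norm2 ![-c, Real.sqrt 3 * c] = 2 * |c| := by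
    intro c
    have h : (-c) ^ 2 + (Real.sqrt 3 * c) ^ 2 = (2 * |c|) ^ 2 := by
      rw [mul_pow, Real.sq_sqrt (by norm_num : (3:ℝ) ≥ 0), mul_pow, sq_abs]; ring
    simp only [norm2, Matrix.cons_val_zero, Matrix.cons_val_one, Matrix.head_cons]
    rw [h, Real.sqrt_sq (by positivity)]
  rw [h1, h2, h3]
  have hsq : Real.sqrt 3 * Real.sqrt 3 = 3 := Real.mul_self_sqrt (by norm_num)
  have hn1 : norm2 ![(1:ℝ), 0] = 1 := by
    have : norm2 ![(1:ℝ), 0] = Real.sqrt 1 := by norm_num [norm2]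
    simp [this]
  refine ⟨?_, ?_, ?_, ?_, ?_, ?_⟩
  · intro h
    have := congrFun h 0
    simp at this
  · intro h
    have := congrFun h 0
    simp [hc1ne] at this
  · intro h
    have := congrFun h 0
    simp at this
    exact hc2ne (by linarith)
  · rw [norm2_special, hn1, Real.cos_pi_div_three]
    simp [dot2]
    ring
  · rw [norm2_special', hn1, Real.cos_pi_div_three]
    simp [dot2]
    ring
  · rw [norm2_special, norm2_special', Real.cos_pi_div_three]
    simp only [dot2, Matrix.cons_val_zero, Matrix.cons_val_one, Matrix.head_cons]
    have : c1 * -c2 + Real.sqrt 3 * c1 * (Real.sqrt 3 * c2) = 2 * (c1 * c2) := by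
      rw [show Real.sqrt 3 * c1 * (Real.sqrt 3 * c2)
        = Real.sqrt 3 * Real.sqrt 3 * (c1 * c2) by ring, hsq]; ring
    rw [this, abs_mul, abs_mul, abs_two]
    ring
end

section
/- Let $\Gamma$ be a finite graph with edge heights, and suppose there exists a closed loop in $\Gamma$ with nonzero net height change all of whose edge-to-edge transitions occur through 'parallel' vertex transitions (transitions that contribute zero twists). Then in the universal cover tree there exist rays with arbitrarily large coarse slope; i.e., the maximum slope is infinite. -/
/-- A graph given by directed edges with a reversal involution and a height labeling
satisfying `h (bar e) = - h e`. -/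
structure HGraph where
  V : Type
  E : Type
  src : E → V
  tgt : E → V
  bar : E → E
  bar_invol : ∀ e, bar (bar e) = e
  src_bar : ∀ e, src (bar e) = tgt e
  h : E → ℝ
  h_bar : ∀ e, h (bar e) = - h e

namespace HGraph

variable (G : HGraph)

/-- A nonempty closed edge path: consecutive edges match up, including the wrap-around. -/
def IsClosedPath (l : List G.E) : Prop :=
  l ≠ [] ∧ List.Chain' (fun e e' => G.tgt e = G.src e') (l ++ l.take 1)

/-- An embedded (simple) closed loop: it visits no vertex twice. -/
def IsEmbedded (l : List G.E) : Prop := (l.map G.src).Nodup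

/-- Net height change around an edge path. -/
def height (l : List G.E) : ℝ := (l.map G.h).sum

/-- Slope of a loop: net height change divided by length. -/
noncomputable def slope (l : List G.E) : ℝ := G.height l / l.length

/-- One-step reachability, reflexive-transitive closure. -/
def Reaches (u v : G.V) : Prop :=
  Relation.ReflTransGen (fun a b => ∃ e, G.src e = a ∧ G.tgt e = b) u v

def Connected : Prop := ∀ u v, G.Reaches u v

/-- An infinite edge path. -/
def IsInfPath (c : ℕ → G.E) : Prop := ∀ n, G.tgt (c n) = G.src (c (n + 1))

/-- A reduced (non-backtracking) infinite path; such paths are exactly the projections of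
geodesic rays in the universal cover tree. -/
def IsReduced (c : ℕ → G.E) : Prop := ∀ n, c (n + 1) ≠ G.bar (c n)

/-- Net height change along the first `n` edges of an infinite path. -/
def heightSum (c : ℕ → G.E) (n : ℕ) : ℝ := ∑ i ∈ Finset.range n, G.h (c i)

end HGraph

open Classical in
/-- Number of twists along the first `n + 1` edges of an infinite path: the number of
edge-to-edge transitions that are not parallel. -/
noncomputable def twistCount (G : HGraph) (parallel : G.E → G.E → Prop)
    (c : ℕ → G.E) (n : ℕ) : ℕ :=
  ((Finset.range n).filter fun i => ¬ parallel (c i) (c (i + 1))).card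

namespace Stmt15Aux

lemma list_sum_eq (G : HGraph) (f : G.E → ℝ) (c : ℕ → G.E) :
    ∀ l : List G.E, (∀ i (hi : i < l.length), c i = l.get ⟨i, hi⟩) →
      (l.map f).sum = ∑ i ∈ Finset.range l.length, f (c i) := by
  intro l
  induction l generalizing c with
  | nil => intro _; simp
  | cons a t ih =>
    intro hc
    have h0 : c 0 = a := hc 0 (by simp)
    have ht : (t.map f).sum = ∑ i ∈ Finset.range t.length, f (c (i + 1)) := by
      refine ih (fun i => c (i + 1)) (fun i hi => ?_)
      have := hc (i + 1) (by simpa using Nat.succ_lt_succ hi)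
      simpa using this
    simp only [List.map_cons, List.sum_cons, List.length_cons, Finset.sum_range_succ',
      ht, h0]
    ring

lemma cyc (G : HGraph) {R : G.E → G.E → Prop} {l : List G.E} (hne : l ≠ [])
    (hch : List.Chain' R (l ++ l.take 1)) :
    ∀ i, (hi : i < l.length) → R (l.get ⟨i, hi⟩)
      (l.get ⟨(i + 1) % l.length, Nat.mod_lt _ (List.length_pos_iff.2 hne)⟩) := by
  intro i hi
  have hL : 0 < l.length := List.length_pos_iff.2 hne
  have hlen : (l ++ l.take 1).length = l.length + 1 := by
    simp [List.length_take, Nat.min_eq_left hL]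
  replace hch := List.isChain_iff_getElem.1 hch
  have key : R ((l ++ l.take 1).get ⟨i, by omega⟩) ((l ++ l.take 1).get ⟨i + 1, by omega⟩) :=
    hch i (by omega)
  have e1 : (l ++ l.take 1).get ⟨i, by omega⟩ = l.get ⟨i, hi⟩ := by
    simp only [List.get_eq_getElem]
    exact List.getElem_append_left hi
  rw [e1] at key
  rcases Nat.lt_or_ge (i + 1) l.length with h | h
  · have e2 : (l ++ l.take 1).get ⟨i + 1, by omega⟩ = l.get ⟨i + 1, h⟩ := by
      simp only [List.get_eq_getElem]
      exact List.getElem_append_left h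
    rw [e2] at key
    have : (⟨(i + 1) % l.length, Nat.mod_lt _ hL⟩ : Fin l.length) = ⟨i + 1, h⟩ :=
      Fin.ext (Nat.mod_eq_of_lt h)
    rw [this]
    exact key
  · have hiL : i + 1 = l.length := by omega
    have hmod : (i + 1) % l.length = 0 := by rw [hiL, Nat.mod_self]
    have e2 : (l ++ l.take 1).get ⟨i + 1, by omega⟩ = l.get ⟨0, hL⟩ := by
      have htake : l.take 1 = [l.get ⟨0, hL⟩] := by
        cases l with
        | nil => simp at hL
        | cons a t => simp
      simp only [List.get_eq_getElem]
      rw [List.getElem_append_right (by omega : l.length ≤ i + 1)]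
      simp [htake, hiL]
    rw [e2] at key
    have : (⟨(i + 1) % l.length, Nat.mod_lt _ hL⟩ : Fin l.length) = ⟨0, hL⟩ :=
      Fin.ext hmod
    rw [this]
    exact key

lemma aux (G : HGraph) (parallel : G.E → G.E → Prop) (L : ℕ) (hL : 0 < L)
    (c : ℕ → G.E) (hinf : G.IsInfPath c) (hrd : G.IsReduced c)
    (hp : ∀ n, parallel (c n) (c (n + 1))) (hper : ∀ n, c (n + L) = c n)
    (hS : 0 < ∑ i ∈ Finset.range L, G.h (c i)) :
    ∀ M : ℝ, ∃ c : ℕ → G.E, G.IsInfPath c ∧ G.IsReduced c ∧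
      ∀ n₀ : ℕ, ∃ n, n₀ ≤ n ∧ M * (twistCount G parallel c n) < G.heightSum c n := by
  intro M
  classical
  refine ⟨c, hinf, hrd, fun n₀ => ?_⟩
  set S := ∑ i ∈ Finset.range L, G.h (c i) with hSdef
  have hshift : ∀ k m, c (m + k * L) = c m := by
    intro k
    induction k with
    | zero => simp
    | succ k ih =>
      intro m
      have h1 : m + (k + 1) * L = (m + k * L) + L := by ring
      rw [h1, hper, ih]
  have hsum : ∀ k : ℕ, G.heightSum c (k * L) = k * S := by
    intro k
    induction k with
    | zero => simp [HGraph.heightSum]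
    | succ k ih =>
      have h1 : (k + 1) * L = k * L + L := by ring
      rw [h1]
      unfold HGraph.heightSum at ih ⊢
      rw [Finset.sum_range_add, ih]
      have h2 : ∀ i ∈ Finset.range L, G.h (c (k * L + i)) = G.h (c i) := by
        intro i _
        rw [show k * L + i = i + k * L by ring, hshift]
      rw [Finset.sum_congr rfl h2, ← hSdef]
      push_cast
      ring
  have htw : ∀ n, twistCount G parallel c n = 0 := by
    intro n
    unfold twistCount
    rw [Finset.card_eq_zero, Finset.filter_eq_empty_iff]
    intro i _
    simp [hp i]
  refine ⟨(max n₀ 1) * L, ?_, ?_⟩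
  · calc n₀ ≤ max n₀ 1 := le_max_left _ _
      _ = (max n₀ 1) * 1 := (mul_one _).symm
      _ ≤ (max n₀ 1) * L := Nat.mul_le_mul_left _ hL
  · rw [htw, hsum]
    push_cast
    rw [mul_zero]
    have h1 : (1 : ℝ) ≤ (n₀ : ℝ) ⊔ 1 := le_max_right _ _
    exact mul_pos (lt_of_lt_of_le one_pos h1) hS

end Stmt15Aux

/-- If a finite graph has a closed loop of nonzero net height all of whose transitions
(including the wrap-around) are parallel (contribute no twists), then there are rays in
the universal cover tree with arbitrarily large ratio of height change to twists: the
maximum slope is infinite. -/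
theorem stmt_15 (G : HGraph) (hV : Finite G.V) (hE : Finite G.E)
    (parallel : G.E → G.E → Prop)
    (hpar_bar : ∀ e e', parallel e e' ↔ parallel (G.bar e') (G.bar e))
    (l : List G.E) (hl : G.IsClosedPath l) (hh : G.height l ≠ 0)
    (hred : List.Chain' (fun e e' => e' ≠ G.bar e) (l ++ l.take 1))
    (hpar : List.Chain' (fun e e' => parallel e e') (l ++ l.take 1)) :
    ∀ M : ℝ, ∃ c : ℕ → G.E, G.IsInfPath c ∧ G.IsReduced c ∧
      ∀ n₀ : ℕ, ∃ n, n₀ ≤ n ∧ M * (twistCount G parallel c n) < G.heightSum c n := by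
  classical
  -- basic setup
  obtain ⟨hne, hchain⟩ := hl
  set L := l.length with hLdef
  have hL : 0 < L := List.length_pos_iff.2 hne
  -- tgt of bar
  have tgt_bar : ∀ e, G.tgt (G.bar e) = G.src e := by
    intro e
    have := G.src_bar (G.bar e)
    rw [G.bar_invol] at this
    exact this.symm
  -- the periodic edge sequence
  set e : ℕ → G.E := fun n => l.get ⟨n % L, Nat.mod_lt _ hL⟩ with hedef
  have e_eq : ∀ a b : ℕ, a % L = b % L → e a = e b := by
    intro a b hab
    simp only [hedef]
    exact congrArg l.get (Fin.ext hab)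
  have msucc : ∀ n : ℕ, (n % L + 1) % L = (n + 1) % L := fun n =>
    (Nat.ModEq.add_right 1 (Nat.mod_modEq n L))
  have hR : ∀ (R : G.E → G.E → Prop), List.Chain' R (l ++ l.take 1) →
      ∀ n, R (e n) (e (n + 1)) := by
    intro R hch n
    have key := Stmt15Aux.cyc G hne hch (n % L) (Nat.mod_lt _ hL)
    have h1 : e n = l.get ⟨n % L, Nat.mod_lt _ hL⟩ := rfl
    have h2 : e (n + 1) = l.get ⟨(n % L + 1) % L, Nat.mod_lt _ hL⟩ := by
      simp only [hedef]
      exact congrArg l.get (Fin.ext (msucc n).symm)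
    rw [h1, h2]
    exact key
  have hstepE : ∀ n, G.tgt (e n) = G.src (e (n + 1)) := hR _ hchain
  have hredE : ∀ n, e (n + 1) ≠ G.bar (e n) := hR _ hred
  have hparE : ∀ n, parallel (e n) (e (n + 1)) := hR _ hpar
  have e_lt : ∀ i (hi : i < L), e i = l.get ⟨i, hi⟩ := by
    intro i hi
    simp only [hedef]
    exact congrArg l.get (Fin.ext (Nat.mod_eq_of_lt hi))
  have hheight : G.height l = ∑ i ∈ Finset.range L, G.h (e i) :=
    Stmt15Aux.list_sum_eq G G.h e l e_lt
  rcases lt_or_gt_of_ne hh with hneg | hpos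
  · -- negative height: traverse the loop backwards using bar
    set c : ℕ → G.E := fun n => G.bar (e (L - 1 - n % L)) with hcdef
    have csucc : ∀ n, c (n + 1) = G.bar (e (L - 1 - (n % L + 1) % L)) := by
      intro n
      simp only [hcdef, msucc n]
    have cases_n : ∀ n, (n % L + 1 < L ∧ c n = G.bar (e (L - 1 - n % L)) ∧
        c (n + 1) = G.bar (e (L - 2 - n % L))) ∨
        (n % L = L - 1 ∧ c n = G.bar (e 0) ∧ c (n + 1) = G.bar (e (L - 1))) := by
      intro n
      have hmod : n % L < L := Nat.mod_lt _ hL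
      rcases Nat.lt_or_ge (n % L + 1) L with h | h
      · left
        refine ⟨h, rfl, ?_⟩
        rw [csucc n, Nat.mod_eq_of_lt h]
        congr 2
        omega
      · right
        have hnm : n % L = L - 1 := by omega
        refine ⟨hnm, ?_, ?_⟩
        · simp only [hcdef, hnm]
          congr 2
          omega
        · rw [csucc n]
          congr 2
          have : n % L + 1 = L := by omega
          rw [this, Nat.mod_self]
          omega
    have heL : e L = e 0 := e_eq L 0 (by simp)
    have hcinf : G.IsInfPath c := by
      intro n
      rcases cases_n n with ⟨h, h1, h2⟩ | ⟨h, h1, h2⟩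
      · rw [h1, h2, tgt_bar, G.src_bar]
        have := hstepE (L - 2 - n % L)
        have hidx : L - 2 - n % L + 1 = L - 1 - n % L := by omega
        rw [hidx] at this
        exact this.symm
      · rw [h1, h2, tgt_bar, G.src_bar]
        have := hstepE (L - 1)
        have hidx : L - 1 + 1 = L := by omega
        rw [hidx, heL] at this
        exact this.symm
    have hcred : G.IsReduced c := by
      intro n hcontra
      rcases cases_n n with ⟨h, h1, h2⟩ | ⟨h, h1, h2⟩
      · rw [h1, h2, G.bar_invol] at hcontra
        have := hredE (L - 2 - n % L)
        have hidx : L - 2 - n % L + 1 = L - 1 - n % L := by omega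
        rw [hidx] at this
        exact this hcontra.symm
      · rw [h1, h2, G.bar_invol] at hcontra
        have := hredE (L - 1)
        have hidx : L - 1 + 1 = L := by omega
        rw [hidx, heL] at this
        exact this hcontra.symm
    have hcpar : ∀ n, parallel (c n) (c (n + 1)) := by
      intro n
      rcases cases_n n with ⟨h, h1, h2⟩ | ⟨h, h1, h2⟩
      · rw [h1, h2]
        rw [← hpar_bar]
        have := hparE (L - 2 - n % L)
        have hidx : L - 2 - n % L + 1 = L - 1 - n % L := by omega
        rw [hidx] at this
        exact this
      · rw [h1, h2]
        rw [← hpar_bar]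
        have := hparE (L - 1)
        have hidx : L - 1 + 1 = L := by omega
        rw [hidx, heL] at this
        exact this
    have hcper : ∀ n, c (n + L) = c n := by
      intro n
      simp only [hcdef, Nat.add_mod_right]
    have hcsum : 0 < ∑ i ∈ Finset.range L, G.h (c i) := by
      have step1 : ∀ i ∈ Finset.range L, G.h (c i) = - G.h (e (L - 1 - i)) := by
        intro i hi
        rw [Finset.mem_range] at hi
        simp only [hcdef, Nat.mod_eq_of_lt hi, G.h_bar]
      rw [Finset.sum_congr rfl step1, Finset.sum_neg_distrib]
      rw [Finset.sum_range_reflect (fun j => G.h (e j)) L]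
      rw [← hheight]
      linarith
    exact Stmt15Aux.aux G parallel L hL c hcinf hcred hcpar hcper hcsum
  · -- positive height: traverse the loop forwards
    have hper : ∀ n, e (n + L) = e n := fun n => e_eq _ _ (Nat.add_mod_right n L)
    have hsum : 0 < ∑ i ∈ Finset.range L, G.h (e i) := by
      rw [← hheight]; exact hpos
    exact Stmt15Aux.aux G parallel L hL e hstepE hredE hparE hper hsum
end
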